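/- Let β be a braid word with inversion datum ι, let β̄ = ((k_1,−ε_1),…,(k_m,−ε_m)) be the mirror braid word, and define ῑ := −ι. Then: (i) ῑ is an inversion datum on β̄; (ii) the map s ↦ −s−1 is a bijection from Ω(β,ι) to Ω(β̄,ῑ) satisfying d_x(−s−1) (computed for β̄) = d_x(s) (computed for β) for every valid state s; (iii) if (β,ι) is nice then (β̄,ῑ) is nice; and (iv) ℓ(β̄,ῑ) = −ℓ(β,ι). -/

import Mathlib

/-- A braid word on `n` strands with `m` letters. Strand positions are 0-indexed:
the index `p : Fin n` represents the mathematical position `p+1 ∈ {1,…,n}`.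
The `t`-th letter is a crossing of sign `ε t` involving the strand positions
`k t` and `k t + 1` (i.e. mathematical positions `k t + 1` and `k t + 2`). -/
structure BraidWord (n m : ℕ) where
  k : Fin m → ℕ
  hk : ∀ t, k t + 1 < n
  ε : Fin m → ℤ
  hε : ∀ t, ε t = 1 ∨ ε t = -1

namespace BraidWord

variable {n m : ℕ}

/-- Segments of the closed braid diagram: `(p, t)` is the segment at horizontal
position `p` (0-indexed) and level `t` (mod `m`); the `t`-th letter has its bottom
at level `t` and its top at level `t+1`, and `(p, 0)` is the `p`-th closure segment. -/
abbrev Seg (n m : ℕ) := Fin n × Fin m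

/-- Segment adjacent to the `t`-th crossing at the bottom left. -/
def eBL (β : BraidWord n m) (t : Fin m) : Seg n m :=
  (⟨β.k t, by have := β.hk t; omega⟩, t)

/-- Segment adjacent to the `t`-th crossing at the bottom right. -/
def eBR (β : BraidWord n m) (t : Fin m) : Seg n m :=
  (⟨β.k t + 1, β.hk t⟩, t)

/-- Segment adjacent to the `t`-th crossing at the top left. -/
def eTL [NeZero m] (β : BraidWord n m) (t : Fin m) : Seg n m :=
  (⟨β.k t, by have := β.hk t; omega⟩, t + 1)

/-- Segment adjacent to the `t`-th crossing at the top right. -/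
def eTR [NeZero m] (β : BraidWord n m) (t : Fin m) : Seg n m :=
  (⟨β.k t + 1, β.hk t⟩, t + 1)

/-- The writhe of a braid word: the sum of the signs of its crossings. -/
def writhe (β : BraidWord n m) : ℤ := ∑ t, β.ε t

/-- The allowed sign patterns `(BL, BR, TL, TR)` around a crossing of sign `e`. -/
def allowedQuad (e a b c d : ℤ) : Prop :=
  if e = 1 then
    (a = 1 ∧ b = -1 ∧ c = -1 ∧ d = 1) ∨ (a = -1 ∧ b = 1 ∧ c = 1 ∧ d = -1) ∨
    (a = -1 ∧ b = -1 ∧ c = -1 ∧ d = -1) ∨ (a = -1 ∧ b = 1 ∧ c = -1 ∧ d = 1) ∨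
    (a = 1 ∧ b = 1 ∧ c = 1 ∧ d = 1)
  else
    (a = 1 ∧ b = -1 ∧ c = -1 ∧ d = 1) ∨ (a = -1 ∧ b = 1 ∧ c = 1 ∧ d = -1) ∨
    (a = -1 ∧ b = -1 ∧ c = -1 ∧ d = -1) ∨ (a = 1 ∧ b = -1 ∧ c = 1 ∧ d = -1) ∨
    (a = 1 ∧ b = 1 ∧ c = 1 ∧ d = 1)

/-- An inversion datum on a braid word: a `±1`-assignment to each segment,
constant along strands away from crossings, with allowed patterns at crossings. -/
def IsInvDatum [NeZero m] (β : BraidWord n m) (ι : Seg n m → ℤ) : Prop :=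
  (∀ e : Seg n m, ι e = 1 ∨ ι e = -1) ∧
  (∀ (p : Fin n) (t : Fin m), p.val ≠ β.k t → p.val ≠ β.k t + 1 → ι (p, t) = ι (p, t + 1)) ∧
  (∀ t : Fin m, allowedQuad (β.ε t) (ι (β.eBL t)) (ι (β.eBR t)) (ι (β.eTL t)) (ι (β.eTR t)))

/-- A state on a braid word: an integer assignment to each segment, constant along
strands away from crossings, conserved at each crossing. -/
def IsState [NeZero m] (β : BraidWord n m) (s : Seg n m → ℤ) : Prop :=
  (∀ (p : Fin n) (t : Fin m), p.val ≠ β.k t → p.val ≠ β.k t + 1 → s (p, t) = s (p, t + 1)) ∧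
  (∀ t : Fin m, s (β.eBL t) + s (β.eBR t) = s (β.eTL t) + s (β.eTR t))

/-- The sign of an integer, with the convention that the sign of `0` is `+1`. -/
def isign (a : ℤ) : ℤ := if 0 ≤ a then 1 else -1

/-- A state is valid for an inversion datum `ι` if its signs agree with `ι` and the
inequalities required for the extended `R`-matrix to be nonzero hold at each crossing. -/
def IsValid [NeZero m] (β : BraidWord n m) (ι s : Seg n m → ℤ) : Prop :=
  β.IsState s ∧ (∀ e : Seg n m, isign (s e) = ι e) ∧
  ∀ t : Fin m,
    if β.ε t = 1 then s (β.eTR t) ≤ s (β.eBL t) ∨ (0 ≤ s (β.eTR t) ∧ s (β.eBL t) < 0)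
    else s (β.eTL t) ≤ s (β.eBR t) ∨ (0 ≤ s (β.eTL t) ∧ s (β.eBR t) < 0)

/-- The ground state associated to an inversion datum: `s₀(e) = (ι(e) - 1)/2 ∈ {0, -1}`. -/
def groundState (ι : Seg n m → ℤ) : Seg n m → ℤ := fun e => (ι e - 1) / 2

/-- The (minimal) x-degree of a state:
`d_x(s) = -(n-1)/2 + ∑_t ε_t (s(e_BR(t)) + s(e_TR(t)) + 1)/2`. -/
def xdeg [NeZero m] (β : BraidWord n m) (s : Seg n m → ℤ) : ℚ :=
  -((n : ℚ) - 1) / 2 +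
    ∑ t : Fin m, (β.ε t : ℚ) * (((s (β.eBR t) : ℚ) + (s (β.eTR t) : ℚ) + 1) / 2)

/-- A pair (braid word, inversion datum) is nice if every valid state has nonnegative
x-degree and only finitely many valid states have x-degree below any given bound. -/
def IsNice [NeZero m] (β : BraidWord n m) (ι : Seg n m → ℤ) : Prop :=
  (∀ s, β.IsValid ι s → 0 ≤ β.xdeg s) ∧
  ∀ M : ℝ, {s : Seg n m → ℤ | β.IsValid ι s ∧ ((β.xdeg s : ℚ) : ℝ) ≤ M}.Finite

/-- The invariant `ℓ(β,ι) = -∑_{p=2}^{n} ι(b_p)/2 + ∑_t ε_t (1 + ι(e_BR(t))·ι(e_TR(t)))/4`. -/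
def ell [NeZero m] (β : BraidWord n m) (ι : Seg n m → ℤ) : ℚ :=
  -(∑ p : Fin n, if p.val = 0 then 0 else (ι (p, 0) : ℚ)) / 2 +
    ∑ t : Fin m, (β.ε t : ℚ) * ((1 + (ι (β.eBR t) : ℚ) * (ι (β.eTR t) : ℚ)) / 4)

end BraidWord

/-- The mirror braid word: every crossing sign is flipped. -/
def BraidWord.mirror {n m : ℕ} (β : BraidWord n m) : BraidWord n m :=
  ⟨β.k, β.hk, fun t => -β.ε t, fun t => by rcases β.hε t with h | h <;> simp [h]⟩

/-! Mirroring reverses every crossing sign, and `s ↦ -s - 1` reverses the sign of every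
segment value (`isign (-a - 1) = -isign a`) while preserving conservation at crossings; together
with the sign patterns an inversion datum allows, this carries each crossing inequality to the one
of opposite sign. The map is an involution, hence a bijection of valid states, and each term
`ε (s_BR + s_TR + 1)` of the x-degree is unchanged since both factors change sign. -/

namespace BraidWord

variable {n m : ℕ}

lemma mirror_mirror (β : BraidWord n m) : β.mirror.mirror = β := by
  cases β; simp [mirror]

@[simp] lemma mirror_ε (β : BraidWord n m) (t : Fin m) : β.mirror.ε t = -β.ε t := rfl
@[simp] lemma mirror_eBL (β : BraidWord n m) : β.mirror.eBL = β.eBL := rfl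
@[simp] lemma mirror_eBR (β : BraidWord n m) : β.mirror.eBR = β.eBR := rfl
@[simp] lemma mirror_eTL [NeZero m] (β : BraidWord n m) : β.mirror.eTL = β.eTL := rfl
@[simp] lemma mirror_eTR [NeZero m] (β : BraidWord n m) : β.mirror.eTR = β.eTR := rfl

lemma isign_neg_sub_one (a : ℤ) : isign (-a - 1) = -isign a := by
  unfold isign; split_ifs <;> omega

lemma neg_sub_one_involutive :
    Function.Involutive (fun s : Seg n m → ℤ => fun e => -s e - 1) :=
  fun s => funext fun e => show -(-s e - 1) - 1 = s e by ring

lemma allowedQuad_neg {e a b c d : ℤ} (he : e = 1 ∨ e = -1) (h : allowedQuad e a b c d) :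
    allowedQuad (-e) (-a) (-b) (-c) (-d) := by
  rcases he with rfl | rfl <;> unfold allowedQuad at h ⊢ <;> norm_num at h ⊢ <;>
    rcases h with ⟨rfl, rfl, rfl, rfl⟩ | ⟨rfl, rfl, rfl, rfl⟩ | ⟨rfl, rfl, rfl, rfl⟩ |
      ⟨rfl, rfl, rfl, rfl⟩ | ⟨rfl, rfl, rfl, rfl⟩ <;> norm_num

def CrossingCond (e a b c d : ℤ) : Prop :=
  if e = 1 then d ≤ a ∨ (0 ≤ d ∧ a < 0) else c ≤ b ∨ (0 ≤ c ∧ b < 0)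

/-- By conservation `d ≤ a ↔ b ≤ c`, so only the second alternative needs the sign pattern:
for `e = 1`, `a < 0 ≤ d` forces `(BL, BR, TL, TR)` to be `(-, +, -, +)`. -/
lemma CrossingCond.neg_sub_one {e a b c d : ℤ} (he : e = 1 ∨ e = -1) (hcons : a + b = c + d)
    (hq : allowedQuad e (isign a) (isign b) (isign c) (isign d)) (h : CrossingCond e a b c d) :
    CrossingCond (-e) (-a - 1) (-b - 1) (-c - 1) (-d - 1) := by
  rcases he with rfl | rfl <;> simp only [allowedQuad, CrossingCond, isign] at hq h ⊢ <;>
    norm_num at hq h ⊢ <;> omega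

section

variable [NeZero m]

lemma isValid_iff (β : BraidWord n m) (ι s : Seg n m → ℤ) :
    β.IsValid ι s ↔ β.IsState s ∧ (∀ e, isign (s e) = ι e) ∧
      ∀ t, CrossingCond (β.ε t) (s (β.eBL t)) (s (β.eBR t)) (s (β.eTL t)) (s (β.eTR t)) :=
  Iff.rfl

lemma IsInvDatum.mirror {β : BraidWord n m} {ι : Seg n m → ℤ} (hι : β.IsInvDatum ι) :
    β.mirror.IsInvDatum (fun e => -ι e) := by
  obtain ⟨hsign, hstrand, hquad⟩ := hι
  exact ⟨fun e => by rcases hsign e with h | h <;> simp [h],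
    fun p t hp hp' => congrArg Neg.neg (hstrand p t hp hp'),
    fun t => allowedQuad_neg (β.hε t) (hquad t)⟩

lemma IsState.mirror {β : BraidWord n m} {s : Seg n m → ℤ} (hs : β.IsState s) :
    β.mirror.IsState (fun e => -s e - 1) :=
  ⟨fun p t hp hp' => by simp only [hs.1 p t hp hp'],
    fun t => by simp only [mirror_eBL, mirror_eBR, mirror_eTL, mirror_eTR]; linarith [hs.2 t]⟩

lemma IsValid.mirror {β : BraidWord n m} {ι s : Seg n m → ℤ} (hι : β.IsInvDatum ι)
    (h : β.IsValid ι s) : β.mirror.IsValid (fun e => -ι e) (fun e => -s e - 1) := by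
  obtain ⟨hs, hsign, hcross⟩ := (isValid_iff β ι s).1 h
  refine (isValid_iff _ _ _).2 ⟨hs.mirror, fun e => by simp only [isign_neg_sub_one, hsign],
    fun t => CrossingCond.neg_sub_one (β.hε t) (hs.2 t) ?_ (hcross t)⟩
  simpa only [mirror_eBL, mirror_eBR, mirror_eTL, mirror_eTR, hsign] using hι.2.2 t

lemma IsValid.of_mirror {β : BraidWord n m} {ι s : Seg n m → ℤ} (hι : β.IsInvDatum ι)
    (h : β.mirror.IsValid (fun e => -ι e) s) : β.IsValid ι (fun e => -s e - 1) := by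
  simpa only [mirror_mirror, neg_neg] using h.mirror hι.mirror

lemma bijOn_neg_sub_one_isValid_mirror {β : BraidWord n m} {ι : Seg n m → ℤ}
    (hι : β.IsInvDatum ι) :
    Set.BijOn (fun s : Seg n m → ℤ => fun e => -s e - 1)
      {s | β.IsValid ι s} {s | β.mirror.IsValid (fun e => -ι e) s} :=
  Set.InvOn.bijOn ⟨fun s _ => neg_sub_one_involutive s, fun s _ => neg_sub_one_involutive s⟩
    (fun _ => IsValid.mirror hι) (fun _ => IsValid.of_mirror hι)

lemma xdeg_mirror (β : BraidWord n m) (s : Seg n m → ℤ) :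
    β.mirror.xdeg (fun e => -s e - 1) = β.xdeg s := by
  unfold xdeg
  congr 1
  refine Finset.sum_congr rfl fun t _ => ?_
  change (-(β.ε t : ℤ) : ℚ) * (((-s (β.eBR t) - 1 : ℤ) + (-s (β.eTR t) - 1 : ℤ) + 1) / 2) = _
  push_cast
  ring

lemma IsNice.mirror {β : BraidWord n m} {ι : Seg n m → ℤ} (hι : β.IsInvDatum ι)
    (h : β.IsNice ι) : β.mirror.IsNice (fun e => -ι e) := by
  obtain ⟨hpos, hfin⟩ := h
  refine ⟨fun s hs => ?_, fun M => ?_⟩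
  · have := hpos _ (hs.of_mirror hι)
    rwa [← mirror_mirror β, xdeg_mirror] at this
  · refine ((hfin M).image fun s e => -s e - 1).subset fun s ⟨hs, hM⟩ => ?_
    refine ⟨fun e => -s e - 1, ⟨hs.of_mirror hι, ?_⟩, neg_sub_one_involutive s⟩
    rwa [← mirror_mirror β, xdeg_mirror]

lemma ell_mirror (β : BraidWord n m) (ι : Seg n m → ℤ) :
    β.mirror.ell (fun e => -ι e) = -β.ell ι := by
  have hclosure : ∑ p : Fin n, (if p.val = 0 then 0 else -(ι (p, 0) : ℚ)) =
      -∑ p : Fin n, (if p.val = 0 then 0 else (ι (p, 0) : ℚ)) := by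
    simp only [← Finset.sum_neg_distrib, neg_ite, neg_zero]
  simp only [ell, mirror_ε, mirror_eBR, mirror_eTR, Int.cast_neg, hclosure, neg_mul, mul_neg,
    neg_neg, Finset.sum_neg_distrib]
  ring

end

end BraidWord

theorem mirror_inversion_datum (n m : ℕ) [NeZero m] (β : BraidWord n m)
    (ι : BraidWord.Seg n m → ℤ) (hι : β.IsInvDatum ι) :
    β.mirror.IsInvDatum (fun e => -ι e) ∧
    Set.BijOn (fun s : BraidWord.Seg n m → ℤ => fun e => -s e - 1)
      {s | β.IsValid ι s} {s | β.mirror.IsValid (fun e => -ι e) s} ∧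
    (∀ s : BraidWord.Seg n m → ℤ, β.IsValid ι s →
      β.mirror.xdeg (fun e => -s e - 1) = β.xdeg s) ∧
    (β.IsNice ι → β.mirror.IsNice (fun e => -ι e)) ∧
    β.mirror.ell (fun e => -ι e) = -β.ell ι :=
  ⟨hι.mirror, BraidWord.bijOn_neg_sub_one_isValid_mirror hι, fun s _ => β.xdeg_mirror s,
    BraidWord.IsNice.mirror hι, β.ell_mirror ι⟩
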